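/- arXiv:0809.3472 — 5 statements merged into one kernel-verified Lean document; each statement's English description precedes it below -/
import Mathlib

section
/- Let n ≥ 1 be a natural number, let 0 < k₂ ≤ k₁ be real constants and L > 0, and let λ : Fin (2n) → ℂ be an (n,k₁,k₂,L)-hyperbolic tuple. Then (∏_{i=0}^{n−1} |λ i|) · (1 − exp(−k₂·L))^{2n} ≤ ∏_{i=0}^{2n−1} |1 − λ i| ≤ (∏_{i=0}^{n−1} |λ i|) · (1 + exp(−k₂·L))^{2n}. In particular, for any sequence of (n,k₁,k₂,L_m)-hyperbolic tuples λ^{(m)} with L_m → ∞, the ratio (∏_{i=0}^{n−1} |λ^{(m)} i|) / (∏_{i=0}^{2n−1} |1 − λ^{(m)} i|) tends to 1 as m → ∞. -/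
open Filter

/-- A tuple `lam : Fin (2*n) → ℂ` is `(n, k₁, k₂, L)`-hyperbolic if its first `n` entries
have modulus in `[exp (k₂·L), exp (k₁·L)]` (expanding eigenvalues) and its last `n` entries
have modulus in `[exp (−k₁·L), exp (−k₂·L)]` (contracting eigenvalues). -/
def IsHyperbolicTuple (n : ℕ) (k₁ k₂ L : ℝ) (lam : Fin (2 * n) → ℂ) : Prop :=
  (∀ i : Fin (2 * n), (i : ℕ) < n →
      Real.exp (k₂ * L) ≤ ‖lam i‖ ∧ ‖lam i‖ ≤ Real.exp (k₁ * L)) ∧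
  (∀ i : Fin (2 * n), n ≤ (i : ℕ) →
      Real.exp (-(k₁ * L)) ≤ ‖lam i‖ ∧ ‖lam i‖ ≤ Real.exp (-(k₂ * L)))

open Topology Finset

/-!
Write each factor `1 - λ i` as `x i - y i`, where `x i` is the dominant term: `λ i` for an
expanding entry and `1` for a contracting one. In both cases `‖y i‖ ≤ e ‖x i‖` with
`e = exp (-(k₂ L))`, so `‖1 - λ i‖` lies between `‖x i‖ (1 - e)` and `‖x i‖ (1 + e)`, and the
product of the `‖x i‖` is the product of the expanding moduli. Since `e → 0` as `L → ∞`,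
the ratio is squeezed to `1`.
-/

section NormSub

variable {E : Type*} [SeminormedAddCommGroup E] {e : ℝ}

theorem norm_mul_one_sub_le_norm_sub {x y : E} (h : ‖y‖ ≤ e * ‖x‖) :
    ‖x‖ * (1 - e) ≤ ‖x - y‖ := by
  linarith [norm_sub_norm_le x y]

theorem norm_sub_le_norm_mul_one_add {x y : E} (h : ‖y‖ ≤ e * ‖x‖) :
    ‖x - y‖ ≤ ‖x‖ * (1 + e) := by
  linarith [norm_sub_le x y]

variable {ι : Type*} {s : Finset ι} {x y : ι → E}

theorem prod_norm_mul_one_sub_pow_le_prod_norm_sub (h : ∀ i ∈ s, ‖y i‖ ≤ e * ‖x i‖)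
    (he : e ≤ 1) : (∏ i ∈ s, ‖x i‖) * (1 - e) ^ #s ≤ ∏ i ∈ s, ‖x i - y i‖ := by
  rw [prod_mul_pow_card]
  exact prod_le_prod (fun i _ => mul_nonneg (norm_nonneg _) (by linarith))
    (fun i hi => norm_mul_one_sub_le_norm_sub (h i hi))

theorem prod_norm_sub_le_prod_norm_mul_one_add_pow (h : ∀ i ∈ s, ‖y i‖ ≤ e * ‖x i‖) :
    ∏ i ∈ s, ‖x i - y i‖ ≤ (∏ i ∈ s, ‖x i‖) * (1 + e) ^ #s := by
  rw [prod_mul_pow_card]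
  exact prod_le_prod (fun i _ => norm_nonneg _)
    (fun i hi => norm_sub_le_norm_mul_one_add (h i hi))

end NormSub

theorem tendsto_div_nhds_one_of_pow_squeeze {α : Type*} {l : Filter α} {P D e : α → ℝ} (N : ℕ)
    (he : Tendsto e l (𝓝 0)) (hP : ∀ᶠ m in l, 0 < P m)
    (hlow : ∀ᶠ m in l, P m * (1 - e m) ^ N ≤ D m)
    (hup : ∀ᶠ m in l, D m ≤ P m * (1 + e m) ^ N) :
    Tendsto (fun m => P m / D m) l (𝓝 1) := by
  have hsub : Tendsto (fun m => (1 - e m) ^ N) l (𝓝 1) := by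
    simpa using ((tendsto_const_nhds (x := (1 : ℝ))).sub he).pow N
  have hadd : Tendsto (fun m => (1 + e m) ^ N) l (𝓝 1) := by
    simpa using ((tendsto_const_nhds (x := (1 : ℝ))).add he).pow N
  have hratio : Tendsto (fun m => D m / P m) l (𝓝 1) := by
    refine tendsto_of_tendsto_of_tendsto_of_le_of_le' hsub hadd ?_ ?_
    · filter_upwards [hP, hlow] with m hPm hm
      rwa [le_div_iff₀ hPm, mul_comm]
    · filter_upwards [hP, hup] with m hPm hm
      rwa [div_le_iff₀ hPm, mul_comm]
  simpa using hratio.inv₀ one_ne_zero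

namespace IsHyperbolicTuple

variable {n : ℕ} {k₁ k₂ L : ℝ} {lam : Fin (2 * n) → ℂ}

theorem prod_norm_expanding_pos (h : IsHyperbolicTuple n k₁ k₂ L lam) :
    0 < ∏ i ∈ univ.filter (fun i : Fin (2 * n) => (i : ℕ) < n), ‖lam i‖ :=
  prod_pos fun i hi => (Real.exp_pos _).trans_le (h.1 i (mem_filter.mp hi).2).1

theorem one_le_exp_neg_mul_norm (h : IsHyperbolicTuple n k₁ k₂ L lam) {i : Fin (2 * n)}
    (hi : (i : ℕ) < n) : 1 ≤ Real.exp (-(k₂ * L)) * ‖lam i‖ :=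
  calc 1 = Real.exp (-(k₂ * L)) * Real.exp (k₂ * L) := by
          rw [← Real.exp_add, neg_add_cancel, Real.exp_zero]
    _ ≤ Real.exp (-(k₂ * L)) * ‖lam i‖ := by gcongr; exact (h.1 i hi).1

theorem prod_norm_one_sub_bounds (h : IsHyperbolicTuple n k₁ k₂ L lam) (hk₂L : 0 ≤ k₂ * L) :
    (∏ i ∈ univ.filter (fun i : Fin (2 * n) => (i : ℕ) < n), ‖lam i‖) *
        (1 - Real.exp (-(k₂ * L))) ^ (2 * n) ≤ ∏ i, ‖1 - lam i‖ ∧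
      ∏ i, ‖1 - lam i‖ ≤
        (∏ i ∈ univ.filter (fun i : Fin (2 * n) => (i : ℕ) < n), ‖lam i‖) *
          (1 + Real.exp (-(k₂ * L))) ^ (2 * n) := by
  set e := Real.exp (-(k₂ * L))
  let x : Fin (2 * n) → ℂ := fun i => if (i : ℕ) < n then lam i else 1
  let y : Fin (2 * n) → ℂ := fun i => if (i : ℕ) < n then 1 else lam i
  have hxy : ∏ i, ‖x i - y i‖ = ∏ i, ‖1 - lam i‖ := by
    refine prod_congr rfl fun i _ => ?_
    by_cases hi : (i : ℕ) < n <;> simp [x, y, hi, norm_sub_rev]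
  have hx : ∏ i, ‖x i‖ = ∏ i ∈ univ.filter (fun i : Fin (2 * n) => (i : ℕ) < n), ‖lam i‖ := by
    rw [prod_filter]
    exact prod_congr rfl fun i _ => by by_cases hi : (i : ℕ) < n <;> simp [x, hi]
  have hdom : ∀ i ∈ univ, ‖y i‖ ≤ e * ‖x i‖ := by
    intro i _
    by_cases hi : (i : ℕ) < n
    · simpa [x, y, hi] using h.one_le_exp_neg_mul_norm hi
    · simpa [x, y, hi] using (h.2 i (not_lt.mp hi)).2
  have he : e ≤ 1 := Real.exp_le_one_iff.mpr (neg_nonpos.mpr hk₂L)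
  have hlow := prod_norm_mul_one_sub_pow_le_prod_norm_sub hdom he
  have hup := prod_norm_sub_le_prod_norm_mul_one_add_pow hdom
  rw [hxy, hx, card_fin] at hlow hup
  exact ⟨hlow, hup⟩

end IsHyperbolicTuple

theorem det_comparable_to_expanding_product_general (n : ℕ) (k₁ k₂ : ℝ)
    (hk₂ : 0 < k₂) :
    (∀ (L : ℝ), 0 < L → ∀ (lam : Fin (2 * n) → ℂ), IsHyperbolicTuple n k₁ k₂ L lam →
      (∏ i ∈ Finset.univ.filter (fun i : Fin (2 * n) => (i : ℕ) < n), ‖lam i‖) *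
          (1 - Real.exp (-(k₂ * L))) ^ (2 * n) ≤
        ∏ i : Fin (2 * n), ‖1 - lam i‖ ∧
      ∏ i : Fin (2 * n), ‖1 - lam i‖ ≤
        (∏ i ∈ Finset.univ.filter (fun i : Fin (2 * n) => (i : ℕ) < n), ‖lam i‖) *
          (1 + Real.exp (-(k₂ * L))) ^ (2 * n)) ∧
    (∀ (L : ℕ → ℝ) (lams : ℕ → Fin (2 * n) → ℂ),
      (∀ m, 0 < L m) → (∀ m, IsHyperbolicTuple n k₁ k₂ (L m) (lams m)) →
      Tendsto L atTop atTop →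
      Tendsto (fun m =>
          (∏ i ∈ Finset.univ.filter (fun i : Fin (2 * n) => (i : ℕ) < n),
              ‖lams m i‖) /
            ∏ i : Fin (2 * n), ‖1 - lams m i‖)
        atTop (nhds 1)) := by
  refine ⟨fun L hL lam hlam => hlam.prod_norm_one_sub_bounds (mul_pos hk₂ hL).le, ?_⟩
  intro L lams hL hlams hLtop
  have he : Tendsto (fun m => Real.exp (-(k₂ * L m))) atTop (𝓝 0) :=
    Real.tendsto_exp_atBot.comp (tendsto_neg_atTop_atBot.comp (hLtop.const_mul_atTop hk₂))
  have hbounds m := (hlams m).prod_norm_one_sub_bounds (mul_pos hk₂ (hL m)).le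
  exact tendsto_div_nhds_one_of_pow_squeeze (2 * n) he
    (.of_forall fun m => (hlams m).prod_norm_expanding_pos)
    (.of_forall fun m => (hbounds m).1) (.of_forall fun m => (hbounds m).2)

theorem det_comparable_to_expanding_product (n : ℕ) (hn : 1 ≤ n) (k₁ k₂ : ℝ)
    (hk₂ : 0 < k₂) (hk : k₂ ≤ k₁) :
    (∀ (L : ℝ), 0 < L → ∀ (lam : Fin (2 * n) → ℂ), IsHyperbolicTuple n k₁ k₂ L lam →
      (∏ i ∈ Finset.univ.filter (fun i : Fin (2 * n) => (i : ℕ) < n), ‖lam i‖) *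
          (1 - Real.exp (-(k₂ * L))) ^ (2 * n) ≤
        ∏ i : Fin (2 * n), ‖1 - lam i‖ ∧
      ∏ i : Fin (2 * n), ‖1 - lam i‖ ≤
        (∏ i ∈ Finset.univ.filter (fun i : Fin (2 * n) => (i : ℕ) < n), ‖lam i‖) *
          (1 + Real.exp (-(k₂ * L))) ^ (2 * n)) ∧
    (∀ (L : ℕ → ℝ) (lams : ℕ → Fin (2 * n) → ℂ),
      (∀ m, 0 < L m) → (∀ m, IsHyperbolicTuple n k₁ k₂ (L m) (lams m)) →
      Tendsto L atTop atTop →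
      Tendsto (fun m =>
          (∏ i ∈ Finset.univ.filter (fun i : Fin (2 * n) => (i : ℕ) < n),
              ‖lams m i‖) /
            ∏ i : Fin (2 * n), ‖1 - lams m i‖)
        atTop (nhds 1)) :=
  det_comparable_to_expanding_product_general n k₁ k₂ hk₂
end

section
/- Let n ≥ 1 be a natural number, let 0 < k₂ ≤ k₁ be real constants and L > 0, and let P be a (2n) × (2n) complex matrix. Suppose the multiset of roots (with multiplicity) of the characteristic polynomial of P admits an enumeration λ : Fin (2n) → ℂ which is an (n,k₁,k₂,L)-hyperbolic tuple. Then exp(n·k₂·L) · (1 − exp(−k₂·L))^{2n} ≤ |det(1 − P)| ≤ exp(n·k₁·L) · (1 + exp(−k₂·L))^{2n}, where 1 denotes the (2n) × (2n) identity matrix. -/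
/-!
Since `det (1 - P)` is the characteristic polynomial evaluated at `1`, it equals `∏ (1 - λᵢ)`.
By the triangle inequality an expanding factor satisfies
`e^{k₂L} (1 - e^{-k₂L}) = e^{k₂L} - 1 ≤ ‖1 - λᵢ‖ ≤ 1 + e^{k₁L} ≤ e^{k₁L} (1 + e^{-k₂L})`,
the last step because `k₂ ≤ k₁`, and a contracting one satisfies
`1 - e^{-k₂L} ≤ ‖1 - λᵢ‖ ≤ 1 + e^{-k₂L}`; multiply the `2n` bounds.
-/

open Finset Real

theorem Matrix.det_one_sub_eq_prod_one_sub_roots {K ι : Type*} [Field K] [IsAlgClosed K]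
    [Fintype ι] [DecidableEq ι] (P : Matrix ι ι K) :
    (1 - P).det = (P.charpoly.roots.map (1 - ·)).prod := by
  rw [← (IsAlgClosed.splits _).eval_eq_prod_roots_of_monic P.charpoly_monic, Matrix.eval_charpoly]
  simp

theorem Fin.prod_ite_val_lt_one {M : Type*} [CommMonoid M] (m n : ℕ) (a : M) :
    ∏ i : Fin m, (if (i : ℕ) < n then a else 1) = a ^ min m n := by
  rw [Finset.prod_ite, prod_const_one, mul_one, Finset.prod_const, Fin.card_filter_val_lt]

theorem exp_nat_mul_mul_pow_two_mul_eq_prod (n : ℕ) (k L c : ℝ) :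
    exp (n * k * L) * c ^ (2 * n) =
      ∏ i : Fin (2 * n), (if (i : ℕ) < n then exp (k * L) else 1) * c := by
  rw [prod_mul_distrib, Fin.prod_ite_val_lt_one, Fin.prod_const, min_eq_right (by omega),
    mul_assoc, exp_nat_mul]

namespace IsHyperbolicTuple

variable {n : ℕ} {k₁ k₂ L : ℝ} {lam : Fin (2 * n) → ℂ}

theorem le_norm_one_sub (h : IsHyperbolicTuple n k₁ k₂ L lam) (i : Fin (2 * n)) :
    (if (i : ℕ) < n then exp (k₂ * L) else 1) * (1 - exp (-(k₂ * L))) ≤ ‖1 - lam i‖ := by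
  split_ifs with hi
  · calc exp (k₂ * L) * (1 - exp (-(k₂ * L))) = exp (k₂ * L) - 1 := by
          rw [mul_sub, ← exp_add, add_neg_cancel, exp_zero, mul_one]
      _ ≤ ‖lam i‖ - ‖(1 : ℂ)‖ := by rw [norm_one]; linarith [(h.1 i hi).1]
      _ ≤ ‖1 - lam i‖ := norm_sub_rev (lam i) 1 ▸ norm_sub_norm_le _ _
  · calc 1 * (1 - exp (-(k₂ * L))) ≤ ‖(1 : ℂ)‖ - ‖lam i‖ := by
          rw [norm_one, one_mul]; linarith [(h.2 i (not_lt.1 hi)).2]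
      _ ≤ ‖1 - lam i‖ := norm_sub_norm_le _ _

theorem norm_one_sub_le (h : IsHyperbolicTuple n k₁ k₂ L lam) (hkL : k₂ * L ≤ k₁ * L)
    (i : Fin (2 * n)) :
    ‖1 - lam i‖ ≤ (if (i : ℕ) < n then exp (k₁ * L) else 1) * (1 + exp (-(k₂ * L))) := by
  have hle : ‖1 - lam i‖ ≤ 1 + ‖lam i‖ := norm_one (α := ℂ) ▸ norm_sub_le _ _
  split_ifs with hi
  · have hone : 1 ≤ exp (k₁ * L) * exp (-(k₂ * L)) := by
      rw [← exp_add]; exact one_le_exp (by linarith)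
    linarith [(h.1 i hi).2]
  · linarith [(h.2 i (not_lt.1 hi)).2]

theorem exp_mul_pow_le_prod_norm_one_sub (h : IsHyperbolicTuple n k₁ k₂ L lam)
    (hkL : 0 ≤ k₂ * L) :
    exp (n * k₂ * L) * (1 - exp (-(k₂ * L))) ^ (2 * n) ≤ ∏ i, ‖1 - lam i‖ := by
  have hc : 0 ≤ 1 - exp (-(k₂ * L)) := sub_nonneg.2 (exp_le_one_iff.2 (neg_nonpos.2 hkL))
  rw [exp_nat_mul_mul_pow_two_mul_eq_prod]
  exact prod_le_prod (fun i _ ↦ mul_nonneg (by positivity) hc) fun i _ ↦ h.le_norm_one_sub i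

theorem prod_norm_one_sub_le_exp_mul_pow (h : IsHyperbolicTuple n k₁ k₂ L lam)
    (hkL : k₂ * L ≤ k₁ * L) :
    ∏ i, ‖1 - lam i‖ ≤ exp (n * k₁ * L) * (1 + exp (-(k₂ * L))) ^ (2 * n) := by
  rw [exp_nat_mul_mul_pow_two_mul_eq_prod]
  exact prod_le_prod (fun i _ ↦ norm_nonneg _) fun i _ ↦ h.norm_one_sub_le hkL i

end IsHyperbolicTuple

theorem det_one_sub_poincare_bounds_general (n : ℕ) (k₁ k₂ L : ℝ)
    (hk₂ : 0 < k₂) (hk : k₂ ≤ k₁) (hL : 0 < L)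
    (P : Matrix (Fin (2 * n)) (Fin (2 * n)) ℂ)
    (hP : ∃ lam : Fin (2 * n) → ℂ,
      (Matrix.charpoly P).roots = Multiset.map lam Finset.univ.val ∧
      IsHyperbolicTuple n k₁ k₂ L lam) :
    Real.exp (n * k₂ * L) * (1 - Real.exp (-(k₂ * L))) ^ (2 * n) ≤
        ‖Matrix.det (1 - P)‖ ∧
      ‖Matrix.det (1 - P)‖ ≤
        Real.exp (n * k₁ * L) * (1 + Real.exp (-(k₂ * L))) ^ (2 * n) := by
  obtain ⟨lam, hroots, hlam⟩ := hP
  have hdet : ‖(1 - P).det‖ = ∏ i, ‖1 - lam i‖ := by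
    rw [Matrix.det_one_sub_eq_prod_one_sub_roots, hroots, Multiset.map_map,
      ← prod_eq_multiset_prod, norm_prod]
    rfl
  rw [hdet]
  exact ⟨hlam.exp_mul_pow_le_prod_norm_one_sub (mul_pos hk₂ hL).le,
    hlam.prod_norm_one_sub_le_exp_mul_pow (mul_le_mul_of_nonneg_right hk hL.le)⟩

theorem det_one_sub_poincare_bounds (n : ℕ) (hn : 1 ≤ n) (k₁ k₂ L : ℝ)
    (hk₂ : 0 < k₂) (hk : k₂ ≤ k₁) (hL : 0 < L)
    (P : Matrix (Fin (2 * n)) (Fin (2 * n)) ℂ)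
    (hP : ∃ lam : Fin (2 * n) → ℂ,
      (Matrix.charpoly P).roots = Multiset.map lam Finset.univ.val ∧
      IsHyperbolicTuple n k₁ k₂ L lam) :
    Real.exp (n * k₂ * L) * (1 - Real.exp (-(k₂ * L))) ^ (2 * n) ≤
        ‖Matrix.det (1 - P)‖ ∧
      ‖Matrix.det (1 - P)‖ ≤
        Real.exp (n * k₁ * L) * (1 + Real.exp (-(k₂ * L))) ^ (2 * n) :=
  det_one_sub_poincare_bounds_general n k₁ k₂ L hk₂ hk hL P hP
end

section
/- Let ℓ : ℕ → ℝ be a sequence of positive real numbers whose counting function N(T) := #{j : ℓ j ≤ T} is finite for every real T. Let a > 0, b ∈ ℝ with a + b > 0, C > 0 and T₀ ≥ 3 be such that for all T ≥ T₀: Σ_{j : T−2 < ℓ j ≤ T+1} ℓ j · exp(−a·ℓ j) ≤ C·exp(b·T). Then limsup_{T→∞} T·N(T)·exp(−(a+b)·T) < ∞. -/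
open Filter

/-- Window counting bound: the number of `j` with `S - 2 < ℓ j ≤ S + 1` is controlled by
the weighted sum bound. -/
lemma window_card_bound_aux (ℓ : ℕ → ℝ) (hfin : ∀ T : ℝ, {j : ℕ | ℓ j ≤ T}.Finite)
    (a b C : ℝ) (ha : 0 < a) (S : ℝ) (hS : 3 ≤ S)
    (hupp : (∑' j : {j : ℕ // S - 2 < ℓ j ∧ ℓ j ≤ S + 1}, ℓ (j : ℕ) * Real.exp (-(a * ℓ (j : ℕ)))) ≤
      C * Real.exp (b * S)) :
    ((Nat.card {j : ℕ | S - 2 < ℓ j ∧ ℓ j ≤ S + 1} : ℝ)) ≤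
      C * Real.exp ((a + b) * S + a) / (S - 2) := by
  have hWfin : {j : ℕ | S - 2 < ℓ j ∧ ℓ j ≤ S + 1}.Finite :=
    (hfin (S + 1)).subset (fun j hj => hj.2)
  haveI : Fintype {j : ℕ // S - 2 < ℓ j ∧ ℓ j ≤ S + 1} := hWfin.fintype
  have htsum : (∑' j : {j : ℕ // S - 2 < ℓ j ∧ ℓ j ≤ S + 1},
      ℓ (j : ℕ) * Real.exp (-(a * ℓ (j : ℕ)))) =
      ∑ j : {j : ℕ // S - 2 < ℓ j ∧ ℓ j ≤ S + 1}, ℓ (j : ℕ) * Real.exp (-(a * ℓ (j : ℕ))) :=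
    tsum_fintype _
  have hlow : ∀ j : {j : ℕ // S - 2 < ℓ j ∧ ℓ j ≤ S + 1},
      (S - 2) * Real.exp (-(a * (S + 1))) ≤ ℓ (j : ℕ) * Real.exp (-(a * ℓ (j : ℕ))) := by
    rintro ⟨j, h1, h2⟩
    have hexp : Real.exp (-(a * (S + 1))) ≤ Real.exp (-(a * ℓ j)) := by
      apply Real.exp_le_exp.mpr
      have : a * ℓ j ≤ a * (S + 1) := mul_le_mul_of_nonneg_left h2 ha.le
      linarith
    exact mul_le_mul (by simpa using h1.le) hexp (Real.exp_pos _).le (by linarith)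
  have hcardsum : (Fintype.card {j : ℕ // S - 2 < ℓ j ∧ ℓ j ≤ S + 1}) •
      ((S - 2) * Real.exp (-(a * (S + 1)))) ≤
      ∑ j : {j : ℕ // S - 2 < ℓ j ∧ ℓ j ≤ S + 1}, ℓ (j : ℕ) * Real.exp (-(a * ℓ (j : ℕ)))
       := by
    have := Finset.card_nsmul_le_sum (Finset.univ)
      (fun j : {j : ℕ // S - 2 < ℓ j ∧ ℓ j ≤ S + 1} => ℓ (j : ℕ) * Real.exp (-(a * ℓ (j : ℕ))))
      ((S - 2) * Real.exp (-(a * (S + 1)))) (fun j _ => hlow j)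
    simpa using this
  set n : ℝ := (Nat.card {j : ℕ | S - 2 < ℓ j ∧ ℓ j ≤ S + 1} : ℝ) with hn
  have hmain : n * ((S - 2) * Real.exp (-(a * (S + 1)))) ≤ C * Real.exp (b * S) := by
    have hcards : Nat.card {j : ℕ | S - 2 < ℓ j ∧ ℓ j ≤ S + 1} =
        Fintype.card {j : ℕ // S - 2 < ℓ j ∧ ℓ j ≤ S + 1} := by
      have h' : Nat.card {j : ℕ // S - 2 < ℓ j ∧ ℓ j ≤ S + 1} =
          Fintype.card {j : ℕ // S - 2 < ℓ j ∧ ℓ j ≤ S + 1} := Nat.card_eq_fintype_card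
      exact h'
    rw [hn, hcards]
    calc (Fintype.card {j : ℕ // S - 2 < ℓ j ∧ ℓ j ≤ S + 1} : ℝ) *
          ((S - 2) * Real.exp (-(a * (S + 1))))
        = (Fintype.card {j : ℕ // S - 2 < ℓ j ∧ ℓ j ≤ S + 1}) •
          ((S - 2) * Real.exp (-(a * (S + 1)))) := by rw [nsmul_eq_mul]
      _ ≤ ∑ j : {j : ℕ // S - 2 < ℓ j ∧ ℓ j ≤ S + 1},
          ℓ (j : ℕ) * Real.exp (-(a * ℓ (j : ℕ))) := hcardsum
      _ ≤ C * Real.exp (b * S) := by rw [← htsum]; exact hupp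
  have hS2 : (0 : ℝ) < S - 2 := by linarith
  rw [le_div_iff₀ hS2]
  have hx : Real.exp (-(a * (S + 1))) * Real.exp (a * (S + 1)) = 1 := by
    rw [← Real.exp_add]; simp
  have hexp2 : Real.exp (b * S) * Real.exp (a * (S + 1)) = Real.exp ((a + b) * S + a) := by
    rw [← Real.exp_add]; congr 1; ring
  calc n * (S - 2)
      = (n * ((S - 2) * Real.exp (-(a * (S + 1))))) * Real.exp (a * (S + 1)) := by
        linear_combination (-(n * (S - 2))) * hx
    _ ≤ (C * Real.exp (b * S)) * Real.exp (a * (S + 1)) :=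
        mul_le_mul_of_nonneg_right hmain (Real.exp_nonneg _)
    _ = C * Real.exp ((a + b) * S + a) := by rw [mul_assoc, hexp2]

set_option maxHeartbeats 2000000 in
theorem counting_limsup_of_window_upper_bound (ℓ : ℕ → ℝ) (hpos : ∀ j, 0 < ℓ j)
    (hfin : ∀ T : ℝ, {j : ℕ | ℓ j ≤ T}.Finite)
    (a b C T₀ : ℝ) (ha : 0 < a) (hab : 0 < a + b) (hC : 0 < C) (hT₀ : 3 ≤ T₀)
    (hupp : ∀ T : ℝ, T₀ ≤ T →
      (∑' j : {j : ℕ // T - 2 < ℓ j ∧ ℓ j ≤ T + 1}, ℓ (j : ℕ) * Real.exp (-(a * ℓ (j : ℕ)))) ≤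
        C * Real.exp (b * T)) :
    limsup (fun T : ℝ =>
      ((T * (Nat.card {j : ℕ | ℓ j ≤ T} : ℝ) * Real.exp (-((a + b) * T)) : ℝ) : EReal))
      atTop < ⊤ := by
  set c : ℝ := a + b with hc
  have hc0 : 0 < c := hab
  set q : ℝ := Real.exp (-(3 * c)) with hq
  have hq0 : 0 < q := Real.exp_pos _
  have hq1 : q < 1 := by
    rw [hq, Real.exp_lt_one_iff]; linarith
  have h1q : 0 < 1 - q := by linarith
  set N₀ : ℝ := (Nat.card {j : ℕ | ℓ j ≤ T₀ + 2} : ℝ) with hN₀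
  have hN₀0 : 0 ≤ N₀ := Nat.cast_nonneg _
  set M : ℝ := N₀ + C * Real.exp a * (1 / (1 - q)) * 4 + C * Real.exp a with hM
  -- eventual smallness facts
  have hev1 : ∀ᶠ T in atTop, T * Real.exp (-(c * T)) ≤ 1 := by
    have h := (Real.tendsto_pow_mul_exp_neg_atTop_nhds_zero 1).comp
      (tendsto_id.const_mul_atTop hc0)
    filter_upwards [h.eventually (eventually_le_nhds hc0)] with T hT
    simp only [Function.comp, pow_one, id_eq] at hT
    nlinarith [Real.exp_pos (-(c * T))]
  have hc2 : 0 < c / 2 := by linarith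
  have hev2 : ∀ᶠ T in atTop, T ^ 2 * Real.exp (-(c / 2 * T)) ≤ 1 := by
    have h := (Real.tendsto_pow_mul_exp_neg_atTop_nhds_zero 2).comp
      (tendsto_id.const_mul_atTop hc2)
    filter_upwards [h.eventually (eventually_le_nhds (pow_pos hc2 2))] with T hT
    simp only [Function.comp, id_eq, mul_pow] at hT
    nlinarith [Real.exp_pos (-(c / 2 * T)), pow_pos hc2 2]
  -- the main eventual bound
  have key : ∀ᶠ T in atTop,
      T * (Nat.card {j : ℕ | ℓ j ≤ T} : ℝ) * Real.exp (-(c * T)) ≤ M := by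
    filter_upwards [hev1, hev2, eventually_ge_atTop (max (T₀ + 2) 8)] with T h1 h2 hTm
    have hT8 : (8 : ℝ) ≤ T := le_trans (le_max_right _ _) hTm
    have hTT0 : T₀ + 2 ≤ T := le_trans (le_max_left _ _) hTm
    have hT0 : (0 : ℝ) ≤ T := by linarith
    have hy0 : (0 : ℝ) ≤ (T - T₀) / 3 := by linarith
    set K : ℕ := ⌈(T - T₀) / 3⌉₊ with hK
    have hWfin : ∀ S : ℝ, {j : ℕ | S - 2 < ℓ j ∧ ℓ j ≤ S + 1}.Finite :=
      fun S => (hfin (S + 1)).subset (fun j hj => hj.2)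
    -- covering
    have hsub : (hfin T).toFinset ⊆ (hfin (T₀ + 2)).toFinset ∪
        (Finset.range K).biUnion (fun k => (hWfin (T - 3 * k)).toFinset) := by
      intro j hj
      rw [Set.Finite.mem_toFinset] at hj
      simp only [Set.mem_setOf_eq] at hj
      rcases le_or_gt (ℓ j) (T₀ + 2) with hx | hx
      · exact Finset.mem_union_left _ (by rw [Set.Finite.mem_toFinset]; exact hx)
      · refine Finset.mem_union_right _ (Finset.mem_biUnion.mpr ?_)
        have hx1 : (0 : ℝ) ≤ (T - ℓ j + 1) / 3 := by linarith
        have hfl : (⌊(T - ℓ j + 1) / 3⌋₊ : ℝ) ≤ (T - ℓ j + 1) / 3 := Nat.floor_le hx1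
        have hfl2 : (T - ℓ j + 1) / 3 < (⌊(T - ℓ j + 1) / 3⌋₊ : ℝ) + 1 :=
          Nat.lt_floor_add_one _
        refine ⟨⌊(T - ℓ j + 1) / 3⌋₊, ?_, ?_⟩
        · rw [Finset.mem_range]
          have hKge : (T - T₀) / 3 ≤ (K : ℝ) := Nat.le_ceil _
          have : ((⌊(T - ℓ j + 1) / 3⌋₊ : ℕ) : ℝ) < (K : ℝ) := by linarith
          exact_mod_cast this
        · rw [Set.Finite.mem_toFinset]
          constructor
          · push_cast; linarith
          · push_cast; linarith
    -- counting bound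
    have hcount : ((hfin T).toFinset.card : ℝ) ≤
        N₀ + ∑ k ∈ Finset.range K, ((hWfin (T - 3 * k)).toFinset.card : ℝ) := by
      have h1' : (hfin T).toFinset.card ≤ (hfin (T₀ + 2)).toFinset.card +
          ∑ k ∈ Finset.range K, ((hWfin (T - 3 * k)).toFinset.card) :=
        le_trans (Finset.card_le_card hsub)
          (le_trans (Finset.card_union_le _ _)
            (Nat.add_le_add_left Finset.card_biUnion_le _))
      have hbase : ((hfin (T₀ + 2)).toFinset.card : ℝ) = N₀ := by
        rw [hN₀, Nat.card_coe_set_eq, Set.ncard_eq_toFinset_card _ (hfin (T₀ + 2))]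
      have h2' : ((hfin T).toFinset.card : ℝ) ≤ ((hfin (T₀ + 2)).toFinset.card : ℝ) +
          ∑ k ∈ Finset.range K, ((hWfin (T - 3 * k)).toFinset.card : ℝ) := by
        exact_mod_cast h1'
      rwa [hbase] at h2'
    -- per-window bound
    have h42 : (0 : ℝ) < T / 2 - 2 := by linarith
    have hwin : ∀ k ∈ Finset.range K, ((hWfin (T - 3 * k)).toFinset.card : ℝ) ≤
        (C * Real.exp a * (Real.exp (c * T) / (T / 2 - 2))) * q ^ k
          + C * Real.exp a * Real.exp (c * (T / 2)) := by
      intro k hk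
      rw [Finset.mem_range] at hk
      have hkK : (k : ℝ) < (T - T₀) / 3 := by
        have hk1 : ((k : ℝ)) + 1 ≤ (K : ℝ) := by exact_mod_cast hk
        have hk2 : (K : ℝ) < (T - T₀) / 3 + 1 := Nat.ceil_lt_add_one hy0
        linarith
      set S : ℝ := T - 3 * k with hSdef
      have hST0 : T₀ ≤ S := by rw [hSdef]; linarith
      have hS3 : 3 ≤ S := le_trans hT₀ hST0
      have hcardeq : ((hWfin (T - 3 * k)).toFinset.card : ℝ) =
          (Nat.card {j : ℕ | S - 2 < ℓ j ∧ ℓ j ≤ S + 1} : ℝ) := by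
        rw [Nat.card_coe_set_eq, Set.ncard_eq_toFinset_card _ (hWfin (T - 3 * k))]
      have hb := window_card_bound_aux ℓ hfin a b C ha S hS3 (hupp S hST0)
      rw [hcardeq]
      refine le_trans hb ?_
      have hqk : Real.exp (c * S) = Real.exp (c * T) * q ^ k := by
        rw [hq, ← Real.exp_nat_mul, ← Real.exp_add]
        congr 1; rw [hSdef]; ring
      have hexpand : C * Real.exp ((a + b) * S + a) = C * Real.exp a * Real.exp (c * S) := by
        simp only [hc, Real.exp_add]; ring
      have hS2 : (1 : ℝ) ≤ S - 2 := by linarith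
      have hpos1 : 0 ≤ C * Real.exp a * (Real.exp (c * T) / (T / 2 - 2)) * q ^ k := by
        positivity
      have hpos2 : 0 ≤ C * Real.exp a * Real.exp (c * (T / 2)) := by positivity
      rcases le_or_gt (T / 2) S with hcase | hcase
      · have e1 : C * Real.exp ((a + b) * S + a) / (S - 2) ≤
            C * Real.exp ((a + b) * S + a) / (T / 2 - 2) :=
          div_le_div_of_nonneg_left (by positivity) h42 (by linarith)
        have e2 : C * Real.exp ((a + b) * S + a) / (T / 2 - 2) =
            (C * Real.exp a * (Real.exp (c * T) / (T / 2 - 2))) * q ^ k := by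
          rw [hexpand, hqk]; field_simp
        linarith [e1, e2.le, hpos2]
      · have e1 : C * Real.exp ((a + b) * S + a) / (S - 2) ≤
            C * Real.exp ((a + b) * S + a) := by
          apply div_le_self (by positivity) hS2
        have e2 : C * Real.exp ((a + b) * S + a) ≤ C * Real.exp a * Real.exp (c * (T / 2)) := by
          rw [hexpand]
          have : Real.exp (c * S) ≤ Real.exp (c * (T / 2)) :=
            Real.exp_le_exp.mpr (mul_le_mul_of_nonneg_left hcase.le hc0.le)
          exact mul_le_mul_of_nonneg_left this (by positivity)
        linarith [hpos1]
    -- geometric sum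
    have hgeo : ∑ k ∈ Finset.range K, q ^ k ≤ 1 / (1 - q) := by
      have hsummable : Summable (fun k : ℕ => q ^ k) :=
        summable_geometric_of_lt_one hq0.le hq1
      have := Summable.sum_le_tsum (Finset.range K) (fun i _ => by positivity) hsummable
      rwa [tsum_geometric_of_lt_one hq0.le hq1, inv_eq_one_div] at this
    have hsum : ∑ k ∈ Finset.range K, ((hWfin (T - 3 * k)).toFinset.card : ℝ) ≤
        C * Real.exp a * (Real.exp (c * T) / (T / 2 - 2)) * (1 / (1 - q))
          + (K : ℝ) * (C * Real.exp a * Real.exp (c * (T / 2))) := by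
      calc ∑ k ∈ Finset.range K, ((hWfin (T - 3 * k)).toFinset.card : ℝ)
          ≤ ∑ k ∈ Finset.range K,
            ((C * Real.exp a * (Real.exp (c * T) / (T / 2 - 2))) * q ^ k
              + C * Real.exp a * Real.exp (c * (T / 2))) := Finset.sum_le_sum hwin
        _ = (C * Real.exp a * (Real.exp (c * T) / (T / 2 - 2))) *
              (∑ k ∈ Finset.range K, q ^ k)
            + (K : ℝ) * (C * Real.exp a * Real.exp (c * (T / 2))) := by
            rw [Finset.sum_add_distrib, ← Finset.mul_sum, Finset.sum_const,
              Finset.card_range, nsmul_eq_mul]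
        _ ≤ _ := by
            have : (C * Real.exp a * (Real.exp (c * T) / (T / 2 - 2))) *
                (∑ k ∈ Finset.range K, q ^ k) ≤
                C * Real.exp a * (Real.exp (c * T) / (T / 2 - 2)) * (1 / (1 - q)) :=
              mul_le_mul_of_nonneg_left hgeo (by positivity)
            linarith
    have hKT : (K : ℝ) ≤ T := by
      have := Nat.ceil_lt_add_one hy0
      rw [← hK] at this
      linarith
    -- assemble
    have hNTcard : (Nat.card {j : ℕ | ℓ j ≤ T} : ℝ) = ((hfin T).toFinset.card : ℝ) := by
      rw [Nat.card_coe_set_eq, Set.ncard_eq_toFinset_card _ (hfin T)]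
    have hNT : (Nat.card {j : ℕ | ℓ j ≤ T} : ℝ) ≤
        N₀ + C * Real.exp a * (Real.exp (c * T) / (T / 2 - 2)) * (1 / (1 - q))
          + (K : ℝ) * (C * Real.exp a * Real.exp (c * (T / 2))) := by
      rw [hNTcard]; linarith [hcount, hsum]
    set E : ℝ := Real.exp (-(c * T)) with hE
    have hE0 : 0 < E := Real.exp_pos _
    have hE1 : Real.exp (c * T) * E = 1 := by
      rw [hE, ← Real.exp_add]; simp
    have hE2 : Real.exp (c * (T / 2)) * E = Real.exp (-(c / 2 * T)) := by
      rw [hE, ← Real.exp_add]; congr 1; ring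
    have hstep1 : T * (Nat.card {j : ℕ | ℓ j ≤ T} : ℝ) * E ≤
        T * (N₀ + C * Real.exp a * (Real.exp (c * T) / (T / 2 - 2)) * (1 / (1 - q))
          + (K : ℝ) * (C * Real.exp a * Real.exp (c * (T / 2)))) * E :=
      mul_le_mul_of_nonneg_right (mul_le_mul_of_nonneg_left hNT hT0) hE0.le
    have hexpand : T * (N₀ + C * Real.exp a * (Real.exp (c * T) / (T / 2 - 2)) * (1 / (1 - q))
          + (K : ℝ) * (C * Real.exp a * Real.exp (c * (T / 2)))) * E =
        N₀ * (T * E)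
          + C * Real.exp a * (1 / (1 - q)) * (T / (T / 2 - 2)) * (Real.exp (c * T) * E)
          + C * Real.exp a * ((K : ℝ) * T) * (Real.exp (c * (T / 2)) * E) := by
      field_simp
    rw [hE1, hE2] at hexpand
    have hTq : T / (T / 2 - 2) ≤ 4 := by
      rw [div_le_iff₀ h42]; linarith
    have hterm1 : N₀ * (T * E) ≤ N₀ := by
      have := mul_le_mul_of_nonneg_left h1 hN₀0
      simpa using this
    have hterm2 : C * Real.exp a * (1 / (1 - q)) * (T / (T / 2 - 2)) * 1 ≤
        C * Real.exp a * (1 / (1 - q)) * 4 := by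
      rw [mul_one]
      exact mul_le_mul_of_nonneg_left hTq (by positivity)
    have hterm3 : C * Real.exp a * ((K : ℝ) * T) * Real.exp (-(c / 2 * T)) ≤
        C * Real.exp a := by
      have hKT2 : (K : ℝ) * T * Real.exp (-(c / 2 * T)) ≤ T ^ 2 * Real.exp (-(c / 2 * T)) := by
        have : (K : ℝ) * T ≤ T ^ 2 := by nlinarith
        exact mul_le_mul_of_nonneg_right this (Real.exp_nonneg _)
      have h3 : (K : ℝ) * T * Real.exp (-(c / 2 * T)) ≤ 1 := le_trans hKT2 h2
      calc C * Real.exp a * ((K : ℝ) * T) * Real.exp (-(c / 2 * T))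
          = C * Real.exp a * ((K : ℝ) * T * Real.exp (-(c / 2 * T))) := by ring
        _ ≤ C * Real.exp a * 1 := mul_le_mul_of_nonneg_left h3 (by positivity)
        _ = C * Real.exp a := mul_one _
    rw [hM]
    calc T * (Nat.card {j : ℕ | ℓ j ≤ T} : ℝ) * E
        ≤ N₀ * (T * E)
          + C * Real.exp a * (1 / (1 - q)) * (T / (T / 2 - 2)) * 1
          + C * Real.exp a * ((K : ℝ) * T) * Real.exp (-(c / 2 * T)) := by
          rw [← hexpand]; exact hstep1
      _ ≤ N₀ + C * Real.exp a * (1 / (1 - q)) * 4 + C * Real.exp a := by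
          linarith [hterm1, hterm2, hterm3]
  have hls : limsup (fun T : ℝ =>
      ((T * (Nat.card {j : ℕ | ℓ j ≤ T} : ℝ) * Real.exp (-(c * T)) : ℝ) : EReal))
      atTop ≤ (M : EReal) := by
    apply limsup_le_of_le (by isBoundedDefault)
    filter_upwards [key] with T hT
    exact_mod_cast hT
  exact lt_of_le_of_lt hls (EReal.coe_lt_top M)
end

section
/- Let ℓ : ℕ → ℝ be a sequence of positive real numbers whose counting function N(T) := #{j : ℓ j ≤ T} is finite for every real T, and let h and a be real numbers with 0 < a < h. Suppose lim_{T→∞} T·N(T)·exp(−h·T) = 1. Then liminf_{T→∞} exp(−(h−a)·T) · Σ_{j : T−1 < ℓ j ≤ T} ℓ j · exp(−a·ℓ j) > 0; in particular the weighted length sums over the windows (T−1, T] grow exponentially in T. -/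
/-!
If `T · N(T) · e^{-hT} → 1`, then `N(T) - N(T - 1)`, the number of lengths in the window
`(T - 1, T]`, is asymptotic to `(1 - e^{-h}) e^{hT} / T`. Each length `ℓ j` in that window satisfies
`ℓ j · e^{-a ℓ j} ≥ (T - 1) e^{-aT}`, so `e^{-(h-a)T}` times the window sum is at least
`(T - 1) e^{-hT} (N(T) - N(T - 1)) → 1 - e^{-h} > 0`.
-/

open Filter Topology Real

noncomputable def lengthCount {ι : Type*} (ℓ : ι → ℝ) (T : ℝ) : ℕ :=
  Nat.card {j | ℓ j ≤ T}

lemma tendsto_increment_of_tendsto_mul_mul_exp {g : ℝ → ℝ} {h L δ : ℝ}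
    (hg : Tendsto (fun T => T * g T * exp (-h * T)) atTop (𝓝 L)) :
    Tendsto (fun T => (T - δ) * exp (-h * T) * (g T - g (T - δ))) atTop
      (𝓝 (L * (1 - exp (-(h * δ))))) := by
  have hshift : Tendsto (fun T => (T - δ) * g (T - δ) * exp (-h * (T - δ))) atTop (𝓝 L) := by
    simpa [Function.comp_def, sub_eq_add_neg] using
      hg.comp (tendsto_atTop_add_const_right atTop (-δ) tendsto_id)
  have hratio : Tendsto (fun T : ℝ => (T - δ) / T) atTop (𝓝 1) := by
    have := (tendsto_const_nhds (x := (1 : ℝ))).sub (tendsto_inv_atTop_zero.const_mul δ)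
    rw [mul_zero, sub_zero] at this
    refine this.congr' ?_
    filter_upwards [eventually_ne_atTop 0] with T hT
    field_simp
  have := (hratio.mul hg).sub ((tendsto_const_nhds (x := exp (-(h * δ)))).mul hshift)
  rw [show 1 * L - exp (-(h * δ)) * L = L * (1 - exp (-(h * δ))) by ring] at this
  refine this.congr' ?_
  filter_upwards [eventually_ne_atTop 0] with T hT
  have hexp : exp (-(h * δ)) * exp (-h * (T - δ)) = exp (-h * T) := by
    rw [← exp_add]; ring_nf
  rw [← hexp]
  field_simp

lemma card_window_eq_lengthCount_sub {ι : Type*} {ℓ : ι → ℝ} {s T : ℝ} (hsT : s ≤ T)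
    (hfin : {j | ℓ j ≤ T}.Finite) :
    (Nat.card {j // s < ℓ j ∧ ℓ j ≤ T} : ℝ) = lengthCount ℓ T - lengthCount ℓ s := by
  have hsub : {j | ℓ j ≤ s} ⊆ {j | ℓ j ≤ T} := fun j hj => le_trans hj hsT
  have hdiff : {j | ℓ j ≤ T} \ {j | ℓ j ≤ s} = {j | s < ℓ j ∧ ℓ j ≤ T} := by
    ext j; simp [and_comm]
  have hcount := Set.ncard_sdiff_add_ncard_of_subset hsub hfin
  rw [hdiff] at hcount
  rw [lengthCount, lengthCount, Nat.card_coe_set_eq, Nat.card_coe_set_eq, ← hcount, Nat.cast_add,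
    add_sub_cancel_right]
  rfl

lemma mul_exp_neg_mul_le_of_lt_of_le {a s x T : ℝ} (ha : 0 ≤ a) (hs : 0 ≤ s) (hsx : s < x)
    (hxT : x ≤ T) : s * exp (-(a * T)) ≤ x * exp (-(a * x)) :=
  mul_le_mul hsx.le (exp_le_exp.2 (by nlinarith)) (exp_pos _).le (hs.trans hsx.le)

lemma lengthCount_sub_mul_le_tsum_window {ι : Type*} {ℓ : ι → ℝ} {a s T : ℝ} (ha : 0 ≤ a)
    (hs : 0 ≤ s) (hsT : s ≤ T) (hfin : {j | ℓ j ≤ T}.Finite) :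
    (lengthCount ℓ T - lengthCount ℓ s) * (s * exp (-(a * T))) ≤
      ∑' j : {j // s < ℓ j ∧ ℓ j ≤ T}, ℓ j * exp (-(a * ℓ j)) := by
  have : Finite {j // s < ℓ j ∧ ℓ j ≤ T} :=
    (hfin.subset fun j (hj : s < ℓ j ∧ ℓ j ≤ T) => hj.2).to_subtype
  have := Fintype.ofFinite {j // s < ℓ j ∧ ℓ j ≤ T}
  rw [← card_window_eq_lengthCount_sub hsT hfin, tsum_fintype, Nat.card_eq_fintype_card,
    ← nsmul_eq_mul]
  exact Finset.card_nsmul_le_sum _ _ _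
    fun j _ => mul_exp_neg_mul_le_of_lt_of_le ha hs j.2.1 j.2.2

lemma EReal.liminf_coe_pos_of_tendsto_of_eventually_le {α : Type*} {l : Filter α} [l.NeBot]
    {f g : α → ℝ} {c : ℝ} (hc : 0 < c) (hf : Tendsto f l (𝓝 c)) (hfg : f ≤ᶠ[l] g) :
    0 < liminf (fun x => (g x : EReal)) l := by
  have hlim : liminf (fun x => (f x : EReal)) l = c :=
    ((continuous_coe_real_ereal.tendsto c).comp hf).liminf_eq
  calc (0 : EReal) < c := by exact_mod_cast hc
    _ = liminf (fun x => (f x : EReal)) l := hlim.symm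
    _ ≤ liminf (fun x => (g x : EReal)) l :=
      liminf_le_liminf (hfg.mono fun x hx => EReal.coe_le_coe_iff.2 hx)

theorem window_sum_exponential_growth_general (ℓ : ℕ → ℝ)
    (hfin : ∀ T : ℝ, {j : ℕ | ℓ j ≤ T}.Finite)
    (h a : ℝ) (ha : 0 < a) (hah : a < h)
    (hPOT : Tendsto (fun T : ℝ => T * (Nat.card {j : ℕ | ℓ j ≤ T} : ℝ) * Real.exp (-h * T))
      atTop (nhds 1)) :
    0 < liminf (fun T : ℝ =>
      ((Real.exp (-((h - a) * T)) *
        ∑' j : {j : ℕ // T - 1 < ℓ j ∧ ℓ j ≤ T}, ℓ (j : ℕ) * Real.exp (-(a * ℓ (j : ℕ))) : ℝ)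
        : EReal)) atTop := by
  have hgap : 0 < 1 * (1 - exp (-(h * 1))) := by
    simpa using exp_lt_one_iff.2 (by linarith : -h < 0)
  have hincr := tendsto_increment_of_tendsto_mul_mul_exp
    (g := fun T => (lengthCount ℓ T : ℝ)) (δ := 1) hPOT
  refine EReal.liminf_coe_pos_of_tendsto_of_eventually_le hgap hincr ?_
  filter_upwards [eventually_ge_atTop 1] with T hT
  have hsplit : exp (-h * T) = exp (-((h - a) * T)) * exp (-(a * T)) := by
    rw [← exp_add]; ring_nf
  calc (T - 1) * exp (-h * T) * (lengthCount ℓ T - lengthCount ℓ (T - 1))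
      = exp (-((h - a) * T)) *
          ((lengthCount ℓ T - lengthCount ℓ (T - 1)) * ((T - 1) * exp (-(a * T)))) := by
        rw [hsplit]; ring
    _ ≤ _ := mul_le_mul_of_nonneg_left
        (lengthCount_sub_mul_le_tsum_window ha.le (by linarith) (by linarith) (hfin T))
        (exp_pos _).le

theorem window_sum_exponential_growth (ℓ : ℕ → ℝ) (hpos : ∀ j, 0 < ℓ j)
    (hfin : ∀ T : ℝ, {j : ℕ | ℓ j ≤ T}.Finite)
    (h a : ℝ) (ha : 0 < a) (hah : a < h)
    (hPOT : Tendsto (fun T : ℝ => T * (Nat.card {j : ℕ | ℓ j ≤ T} : ℝ) * Real.exp (-h * T))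
      atTop (nhds 1)) :
    0 < liminf (fun T : ℝ =>
      ((Real.exp (-((h - a) * T)) *
        ∑' j : {j : ℕ // T - 1 < ℓ j ∧ ℓ j ≤ T}, ℓ (j : ℕ) * Real.exp (-(a * ℓ (j : ℕ))) : ℝ)
        : EReal)) atTop :=
  window_sum_exponential_growth_general ℓ hfin h a ha hah hPOT
end

section
/- Let ℓ : ℕ → ℝ be a sequence of positive real numbers whose counting function N(T) := #{j : ℓ j ≤ T} is finite for every real T, and let h and a be real numbers with 0 < h ≤ a. Suppose lim_{T→∞} T·N(T)·exp(−h·T) = 1. Then there exists a constant C > 0 such that for all T ≥ 1: Σ_{j : ℓ j ≤ T} ℓ j · exp(−a·ℓ j) ≤ C·(1 + T); in particular the weighted length sums have no exponential growth in T. -/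
open Filter

theorem weighted_sum_no_exponential_growth (ℓ : ℕ → ℝ) (hpos : ∀ j, 0 < ℓ j)
    (hfin : ∀ T : ℝ, {j : ℕ | ℓ j ≤ T}.Finite)
    (h a : ℝ) (hh : 0 < h) (hha : h ≤ a)
    (hPOT : Tendsto (fun T : ℝ => T * (Nat.card {j : ℕ | ℓ j ≤ T} : ℝ) * Real.exp (-h * T))
      atTop (nhds 1)) :
    ∃ C : ℝ, 0 < C ∧ ∀ T : ℝ, 1 ≤ T →
      (∑' j : {j : ℕ // ℓ j ≤ T}, ℓ (j : ℕ) * Real.exp (-(a * ℓ (j : ℕ)))) ≤ C * (1 + T) := by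
  -- notation
  set f : ℕ → ℝ := fun j => ℓ j * Real.exp (-(a * ℓ j)) with hf
  have hfnonneg : ∀ j, 0 ≤ f j := fun j =>
    mul_nonneg (hpos j).le (Real.exp_nonneg _)
  -- Nat.card equals toFinset card
  have hcard : ∀ T : ℝ, (Nat.card {j : ℕ | ℓ j ≤ T} : ℕ) = (hfin T).toFinset.card := by
    intro T
    rw [Nat.card_coe_set_eq, Set.ncard_eq_toFinset_card _ (hfin T)]
  -- monotonicity of the finsets
  have hmono : ∀ T T' : ℝ, T ≤ T' → (hfin T).toFinset ⊆ (hfin T').toFinset := by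
    intro T T' hTT'
    rw [Set.Finite.toFinset_subset_toFinset]
    exact fun j hj => le_trans hj hTT'
  -- Step 1: eventual bound from hPOT
  obtain ⟨T₀, hT₀⟩ := eventually_atTop.mp (hPOT.eventually_lt_const (by norm_num : (1:ℝ) < 2))
  set T₁ : ℝ := max T₀ 1 with hT₁def
  set B : ℝ := (Nat.card {j : ℕ | ℓ j ≤ T₁} : ℝ) * T₁ + 2 with hBdef
  have hT₁pos : (0:ℝ) < T₁ := lt_of_lt_of_le one_pos (le_max_right _ _)
  have hB2 : (2:ℝ) ≤ B := by
    have : (0:ℝ) ≤ (Nat.card {j : ℕ | ℓ j ≤ T₁} : ℝ) * T₁ :=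
      mul_nonneg (Nat.cast_nonneg _) hT₁pos.le
    linarith
  have hBpos : (0:ℝ) < B := by linarith
  have hB : ∀ T : ℝ, 1 ≤ T →
      (Nat.card {j : ℕ | ℓ j ≤ T} : ℝ) * T ≤ B * Real.exp (h * T) := by
    intro T hT1
    rcases le_or_gt T₁ T with hTT | hTT
    · -- T large
      have h2 := hT₀ T (le_trans (le_max_left _ _) hTT)
      have hexp : (0:ℝ) < Real.exp (-h * T) := Real.exp_pos _
      have : T * (Nat.card {j : ℕ | ℓ j ≤ T} : ℝ) < 2 * Real.exp (h * T) :=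
        calc T * (Nat.card {j : ℕ | ℓ j ≤ T} : ℝ)
            = T * (Nat.card {j : ℕ | ℓ j ≤ T} : ℝ) * Real.exp (-h * T) * Real.exp (h * T) := by
              rw [mul_assoc, ← Real.exp_add]; ring_nf; rw [Real.exp_zero, mul_one]
          _ < 2 * Real.exp (h * T) :=
              mul_lt_mul_of_pos_right h2 (Real.exp_pos _)
      calc (Nat.card {j : ℕ | ℓ j ≤ T} : ℝ) * T = T * (Nat.card {j : ℕ | ℓ j ≤ T} : ℝ) := by ring
        _ ≤ 2 * Real.exp (h * T) := this.le
        _ ≤ B * Real.exp (h * T) :=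
            mul_le_mul_of_nonneg_right hB2 (Real.exp_nonneg _)
    · -- T small
      have hNmono : (Nat.card {j : ℕ | ℓ j ≤ T} : ℝ) ≤ (Nat.card {j : ℕ | ℓ j ≤ T₁} : ℝ) := by
        have := Finset.card_le_card (hmono T T₁ hTT.le)
        rw [hcard, hcard] at *
        exact_mod_cast this
      have h1 : (Nat.card {j : ℕ | ℓ j ≤ T} : ℝ) * T ≤ (Nat.card {j : ℕ | ℓ j ≤ T₁} : ℝ) * T₁ :=
        mul_le_mul hNmono hTT.le (by linarith) (Nat.cast_nonneg _)
      have hexp1 : (1:ℝ) ≤ Real.exp (h * T) := by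
        rw [← Real.exp_zero]
        exact Real.exp_le_exp.mpr (by positivity)
      calc (Nat.card {j : ℕ | ℓ j ≤ T} : ℝ) * T ≤ (Nat.card {j : ℕ | ℓ j ≤ T₁} : ℝ) * T₁ := h1
        _ ≤ B := by linarith
        _ = B * 1 := (mul_one _).symm
        _ ≤ B * Real.exp (h * T) := mul_le_mul_of_nonneg_left hexp1 hBpos.le
  -- the constant
  refine ⟨B * Real.exp h, by positivity, ?_⟩
  set C : ℝ := B * Real.exp h with hCdef
  have hCpos : 0 < C := by positivity
  -- Step 2: key induction
  have key : ∀ n : ℕ, (∑ j ∈ (hfin (n : ℝ)).toFinset, f j) ≤ C * n := by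
    intro n
    induction n with
    | zero =>
      have : (hfin (0:ℝ)).toFinset = ∅ := by
        rw [Set.Finite.toFinset_eq_empty]
        ext j; simp [not_le.mpr (hpos j)]
      simp [this]
    | succ n ih =>
      rw [show (((n+1:ℕ)):ℝ) = (n:ℝ)+1 from by push_cast; ring]
      have hsub : (hfin (n : ℝ)).toFinset ⊆ (hfin ((n:ℝ)+1)).toFinset :=
        hmono _ _ (by linarith)
      have hsplit := Finset.sum_sdiff (f := f) hsub
      have hshell : (∑ j ∈ (hfin ((n:ℝ)+1)).toFinset \ (hfin (n : ℝ)).toFinset, f j) ≤ C := by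
        have hterm : ∀ j ∈ (hfin ((n:ℝ)+1)).toFinset \ (hfin (n : ℝ)).toFinset,
            f j ≤ ((n:ℝ)+1) * Real.exp (-(h * n)) := by
          intro j hj
          rw [Finset.mem_sdiff, Set.Finite.mem_toFinset, Set.Finite.mem_toFinset] at hj
          obtain ⟨hle, hgt⟩ := hj
          simp only [Set.mem_setOf_eq, not_le] at hle hgt
          have hℓn : (n:ℝ) < ℓ j := hgt
          have he : Real.exp (-(a * ℓ j)) ≤ Real.exp (-(h * n)) := by
            apply Real.exp_le_exp.mpr
            have : h * n ≤ a * ℓ j := by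
              calc h * n ≤ h * ℓ j := by nlinarith
                _ ≤ a * ℓ j := by nlinarith [hpos j]
            linarith
          calc f j = ℓ j * Real.exp (-(a * ℓ j)) := rfl
            _ ≤ ((n:ℝ)+1) * Real.exp (-(h * n)) :=
              mul_le_mul hle he (Real.exp_nonneg _) (by linarith)
        have hcardle : ((hfin ((n:ℝ)+1)).toFinset \ (hfin (n : ℝ)).toFinset).card
            ≤ (hfin ((n:ℝ)+1)).toFinset.card :=
          Finset.card_le_card (Finset.sdiff_subset)
        have hsum := Finset.sum_le_card_nsmul _ f (((n:ℝ)+1) * Real.exp (-(h * n))) hterm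
        rw [nsmul_eq_mul] at hsum
        have hNb := hB ((n:ℝ)+1) (by linarith)
        rw [show ((Nat.card {j : ℕ | ℓ j ≤ ((n:ℝ)+1)} : ℝ)) = ((hfin ((n:ℝ)+1)).toFinset.card : ℝ) by
          exact_mod_cast congrArg Nat.cast (hcard ((n:ℝ)+1))] at hNb
        have hpos1 : (0:ℝ) ≤ ((n:ℝ)+1) * Real.exp (-(h * n)) := by positivity
        calc (∑ j ∈ (hfin ((n:ℝ)+1)).toFinset \ (hfin (n : ℝ)).toFinset, f j)
            ≤ (((hfin ((n:ℝ)+1)).toFinset \ (hfin (n : ℝ)).toFinset).card : ℝ)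
              * (((n:ℝ)+1) * Real.exp (-(h * n))) := hsum
          _ ≤ ((hfin ((n:ℝ)+1)).toFinset.card : ℝ) * (((n:ℝ)+1) * Real.exp (-(h * n))) := by
              apply mul_le_mul_of_nonneg_right _ hpos1
              exact_mod_cast hcardle
          _ = (((hfin ((n:ℝ)+1)).toFinset.card : ℝ) * ((n:ℝ)+1)) * Real.exp (-(h * n)) := by
              ring
          _ ≤ (B * Real.exp (h * ((n:ℝ)+1))) * Real.exp (-(h * n)) := by
              apply mul_le_mul_of_nonneg_right _ (Real.exp_nonneg _)
              exact hNb
          _ = C := by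
              rw [hCdef, mul_assoc, ← Real.exp_add]
              ring_nf
      calc (∑ j ∈ (hfin ((n:ℝ)+1)).toFinset, f j)
          = (∑ j ∈ (hfin ((n:ℝ)+1)).toFinset \ (hfin (n : ℝ)).toFinset, f j)
            + (∑ j ∈ (hfin (n : ℝ)).toFinset, f j) := hsplit.symm
        _ ≤ C + C * n := add_le_add hshell ih
        _ = C * ((n:ℝ)+1) := by ring
  -- Step 3: conclude
  intro T hT1
  have htsum : (∑' j : {j : ℕ // ℓ j ≤ T}, f (j : ℕ)) = ∑ j ∈ (hfin T).toFinset, f j := by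
    have := Finset.tsum_subtype (hfin T).toFinset f
    rw [← this]
    apply tsum_congr_set_coe
    exact ((hfin T).coe_toFinset).symm
  have hceil : T ≤ (⌈T⌉₊ : ℝ) := Nat.le_ceil T
  have hsub : (hfin T).toFinset ⊆ (hfin ((⌈T⌉₊ : ℕ) : ℝ)).toFinset := hmono _ _ hceil
  have hle : (∑ j ∈ (hfin T).toFinset, f j) ≤ ∑ j ∈ (hfin ((⌈T⌉₊ : ℕ) : ℝ)).toFinset, f j :=
    Finset.sum_le_sum_of_subset_of_nonneg hsub (fun j _ _ => hfnonneg j)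
  have hceil2 : ((⌈T⌉₊ : ℕ) : ℝ) ≤ 1 + T := by
    have := Nat.ceil_lt_add_one (by linarith : (0:ℝ) ≤ T)
    linarith
  calc (∑' j : {j : ℕ // ℓ j ≤ T}, ℓ (j : ℕ) * Real.exp (-(a * ℓ (j : ℕ))))
      = ∑ j ∈ (hfin T).toFinset, f j := htsum
    _ ≤ ∑ j ∈ (hfin ((⌈T⌉₊ : ℕ) : ℝ)).toFinset, f j := hle
    _ ≤ C * ⌈T⌉₊ := key ⌈T⌉₊
    _ ≤ C * (1 + T) := mul_le_mul_of_nonneg_left hceil2 hCpos.le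
end
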